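/- (Quasi-conformality criterion, group case) Let 𝒟 ⊆ SL(d,ℝ) be any subset. There exists κ > 1 such that the semigroup generated by 𝒟 has a κ-conformal infinite branch (i.e., there is a sequence {D_i} in 𝒟 with all partial products D_n⋯D_1 κ-conformal) if and only if there exists a bounded subset 𝒰 ⊆ SL(d,ℝ) with 𝒰 ⊆ 𝒟⁻¹𝒰 := ∪_{D∈𝒟} D⁻¹𝒰. -/
import Mathlib

noncomputable section

abbrev SLd (d : ℕ) := Matrix.SpecialLinearGroup (Fin d) ℝ

/-- The operator norm of a matrix acting on Euclidean space. -/
def mOpNorm {d : ℕ} (A : Matrix (Fin d) (Fin d) ℝ) : ℝ :=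
  ‖LinearMap.toContinuousLinearMap (Matrix.toEuclideanLin A)‖

/-- A matrix `A ∈ SL(d,ℝ)` is `κ`-conformal if `‖A‖ · ‖A⁻¹‖ ≤ κ`. -/
def SLConformal {d : ℕ} (κ : ℝ) (A : SLd d) : Prop :=
  mOpNorm (A : Matrix (Fin d) (Fin d) ℝ) *
    mOpNorm ((A⁻¹ : SLd d) : Matrix (Fin d) (Fin d) ℝ) ≤ κ

/-- `branchProd D n = D_n ⋯ D_1`. -/
def branchProd {G : Type*} [Monoid G] (D : ℕ → G) : ℕ → G
  | 0 => 1
  | n + 1 => D (n + 1) * branchProd D n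

open scoped Matrix.Norms.L2Operator
open Matrix

section Aux

lemma mOpNorm_eq {d : ℕ} (A : Matrix (Fin d) (Fin d) ℝ) : mOpNorm A = ‖A‖ := rfl

lemma mOpNorm_nonneg {d : ℕ} (A : Matrix (Fin d) (Fin d) ℝ) : 0 ≤ mOpNorm A :=
  norm_nonneg _

lemma mOpNorm_mul_le {d : ℕ} (A B : Matrix (Fin d) (Fin d) ℝ) :
    mOpNorm (A * B) ≤ mOpNorm A * mOpNorm B :=
  Matrix.l2_opNorm_mul A B

lemma mOpNorm_one_le {d : ℕ} : mOpNorm (1 : Matrix (Fin d) (Fin d) ℝ) ≤ 1 := by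
  rw [mOpNorm_eq, Matrix.cstar_norm_def, _root_.map_one]
  exact ContinuousLinearMap.norm_id_le

lemma euclid_coord_le {d : ℕ} (x : EuclideanSpace ℝ (Fin d)) (i : Fin d) : |x i| ≤ ‖x‖ := by
  rw [EuclideanSpace.norm_eq]
  rw [show |x i| = Real.sqrt (‖x i‖ ^ 2) by rw [Real.sqrt_sq_eq_abs]; simp]
  apply Real.sqrt_le_sqrt
  exact Finset.single_le_sum (f := fun j => ‖x j‖ ^ 2) (fun j _ => by positivity) (Finset.mem_univ i)

lemma euclid_norm_le_sum {d : ℕ} (x : EuclideanSpace ℝ (Fin d)) : ‖x‖ ≤ ∑ i, |x i| := by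
  rw [EuclideanSpace.norm_eq]
  have h1 : ∀ j ∈ Finset.univ, ‖x j‖ ^ 2 ≤ |x j| * ∑ i, |x i| := by
    intro j _
    rw [Real.norm_eq_abs, sq]
    exact mul_le_mul_of_nonneg_left
      (Finset.single_le_sum (f := fun i => |x i|) (fun i _ => abs_nonneg _) (Finset.mem_univ j))
      (abs_nonneg _)
  calc Real.sqrt (∑ j, ‖x j‖ ^ 2) ≤ Real.sqrt ((∑ i, |x i|) ^ 2) := by
        apply Real.sqrt_le_sqrt
        rw [sq]
        refine (Finset.sum_le_sum h1).trans ?_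
        rw [← Finset.sum_mul]
    _ = abs (∑ i, |x i|) := Real.sqrt_sq_eq_abs _
    _ = ∑ i, |x i| := abs_of_nonneg (Finset.sum_nonneg fun i _ => abs_nonneg _)

lemma mOpNorm_mulVec_coord {d : ℕ} (A : Matrix (Fin d) (Fin d) ℝ)
    (x : EuclideanSpace ℝ (Fin d)) (i : Fin d) :
    |A.mulVec x i| ≤ mOpNorm A * ‖x‖ := by
  have h1 : |A.mulVec x i| ≤ ‖(LinearMap.toContinuousLinearMap (Matrix.toEuclideanLin A)) x‖ :=
    euclid_coord_le ((LinearMap.toContinuousLinearMap (Matrix.toEuclideanLin A)) x) i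
  exact h1.trans (ContinuousLinearMap.le_opNorm _ x)

lemma entry_le_mOpNorm {d : ℕ} (A : Matrix (Fin d) (Fin d) ℝ) (i j : Fin d) :
    |A i j| ≤ mOpNorm A := by
  have := mOpNorm_mulVec_coord A ((EuclideanSpace.single j (1:ℝ))) i
  have hx : A.mulVec (EuclideanSpace.single j (1:ℝ)) i = A i j := by
    simp [Matrix.mulVec, dotProduct, EuclideanSpace.single_apply]
  rw [hx, EuclideanSpace.norm_single] at this
  simpa using this

lemma mOpNorm_le_sum {d : ℕ} (A : Matrix (Fin d) (Fin d) ℝ) :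
    mOpNorm A ≤ ∑ i, ∑ j, |A i j| := by
  rw [mOpNorm_eq, Matrix.l2_opNorm_def]
  apply ContinuousLinearMap.opNorm_le_bound _
    (Finset.sum_nonneg fun i _ => Finset.sum_nonneg fun j _ => abs_nonneg _)
  intro x
  have key : ∀ i : Fin d, |A.mulVec x i| ≤ (∑ j, |A i j|) * ‖x‖ := by
    intro i
    calc |A.mulVec x i| = |∑ j, A i j * x j| := rfl
      _ ≤ ∑ j, |A i j * x j| := Finset.abs_sum_le_sum_abs _ _
      _ ≤ ∑ j, |A i j| * ‖x‖ := by
          refine Finset.sum_le_sum fun j _ => ?_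
          rw [abs_mul]
          exact mul_le_mul_of_nonneg_left (euclid_coord_le x j) (abs_nonneg _)
      _ = (∑ j, |A i j|) * ‖x‖ := by rw [Finset.sum_mul]
  calc ‖(Matrix.toEuclideanLin.trans LinearMap.toContinuousLinearMap) A x‖
      ≤ ∑ i, |A.mulVec x i| :=
        euclid_norm_le_sum ((Matrix.toEuclideanLin.trans LinearMap.toContinuousLinearMap) A x)
    _ ≤ ∑ i, (∑ j, |A i j|) * ‖x‖ := Finset.sum_le_sum fun i _ => key i
    _ = (∑ i, ∑ j, |A i j|) * ‖x‖ := by rw [Finset.sum_mul]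

lemma abs_det_le {d : ℕ} (M : Matrix (Fin d) (Fin d) ℝ) (C : ℝ) (hC : 0 ≤ C)
    (h : ∀ i j, |M i j| ≤ C) : |M.det| ≤ (Nat.factorial d) * C ^ d := by
  clear hC
  rw [Matrix.det_apply]
  calc |∑ σ : Equiv.Perm (Fin d), Equiv.Perm.sign σ • ∏ i, M (σ i) i|
      ≤ ∑ σ : Equiv.Perm (Fin d), |Equiv.Perm.sign σ • ∏ i, M (σ i) i| :=
        Finset.abs_sum_le_sum_abs _ _
    _ ≤ ∑ _σ : Equiv.Perm (Fin d), C ^ d := by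
        refine Finset.sum_le_sum fun σ _ => ?_
        have habs : |Equiv.Perm.sign σ • ∏ i, M (σ i) i| = |∏ i, M (σ i) i| := by
          rcases Int.units_eq_one_or (Equiv.Perm.sign σ) with hs | hs <;> simp [hs]
        rw [habs, Finset.abs_prod]
        calc ∏ i, |M (σ i) i| ≤ ∏ _i : Fin d, C :=
              Finset.prod_le_prod (fun i _ => abs_nonneg _) (fun i _ => h _ _)
          _ = C ^ d := by simp
    _ = (Nat.factorial d) * C ^ d := by
        rw [Finset.sum_const, Finset.card_univ, Fintype.card_perm, Fintype.card_fin,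
          nsmul_eq_mul]

/-- Bound on the norm of the inverse: `‖A⁻¹‖ ≤ d² · d! · C^d` if `‖A‖ ≤ C`, `C ≥ 1`. -/
lemma inv_mOpNorm_le {d : ℕ} (A : SLd d) (C : ℝ) (hC : 1 ≤ C)
    (h : mOpNorm (A : Matrix (Fin d) (Fin d) ℝ) ≤ C) :
    mOpNorm ((A⁻¹ : SLd d) : Matrix (Fin d) (Fin d) ℝ) ≤ (d : ℝ)^2 * (Nat.factorial d) * C ^ d := by
  have hC0 : (0:ℝ) ≤ C := zero_le_one.trans hC
  have hcoe : ((A⁻¹ : SLd d) : Matrix (Fin d) (Fin d) ℝ) = adjugate (A : Matrix (Fin d) (Fin d) ℝ) :=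
    Matrix.SpecialLinearGroup.coe_inv A
  have hadj : ∀ i j, |adjugate (A : Matrix (Fin d) (Fin d) ℝ) i j| ≤ (Nat.factorial d) * C ^ d := by
    intro i j
    rw [Matrix.adjugate_apply]
    apply abs_det_le _ C hC0
    intro k l
    by_cases hk : k = j
    · subst hk
      rw [Matrix.updateRow_self]
      rcases eq_or_ne l i with h' | h' <;>
        simp [Pi.single_apply, h'] <;> linarith
    · rw [Matrix.updateRow_ne hk]
      exact (entry_le_mOpNorm _ k l).trans h
  calc mOpNorm ((A⁻¹ : SLd d) : Matrix (Fin d) (Fin d) ℝ)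
      ≤ ∑ i, ∑ j : Fin d, |adjugate (A : Matrix (Fin d) (Fin d) ℝ) i j| := by
        rw [hcoe]; exact mOpNorm_le_sum _
    _ ≤ ∑ _i : Fin d, ∑ _j : Fin d, (Nat.factorial d) * C ^ d :=
        Finset.sum_le_sum fun i _ => Finset.sum_le_sum fun j _ => hadj i j
    _ = (d:ℝ)^2 * (Nat.factorial d) * C ^ d := by
        simp [Finset.sum_const, Finset.card_univ]
        ring

/-- If `A` is κ-conformal then `‖A‖ ≤ d! · κ`. -/
lemma mOpNorm_le_of_conformal {d : ℕ} (A : SLd d) (κ : ℝ) (hκ : 1 ≤ κ)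
    (h : mOpNorm (A : Matrix (Fin d) (Fin d) ℝ) *
      mOpNorm ((A⁻¹ : SLd d) : Matrix (Fin d) (Fin d) ℝ) ≤ κ) :
    mOpNorm (A : Matrix (Fin d) (Fin d) ℝ) ≤ (Nat.factorial d) * κ := by
  rcases Nat.eq_zero_or_pos d with hd | hd
  · subst hd
    have : mOpNorm (A : Matrix (Fin 0) (Fin 0) ℝ) ≤ ∑ i, ∑ j : Fin 0, _ := mOpNorm_le_sum _
    simp at this
    have : mOpNorm (A : Matrix (Fin 0) (Fin 0) ℝ) = 0 :=
      le_antisymm this (mOpNorm_nonneg _)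
    rw [this]
    positivity
  set a := mOpNorm (A : Matrix (Fin d) (Fin d) ℝ) with ha
  set b := mOpNorm ((A⁻¹ : SLd d) : Matrix (Fin d) (Fin d) ℝ) with hb
  have ha0 : 0 ≤ a := mOpNorm_nonneg _
  have hb0 : 0 ≤ b := mOpNorm_nonneg _
  have hdet : ((A⁻¹ : SLd d) : Matrix (Fin d) (Fin d) ℝ).det = 1 :=
    Matrix.SpecialLinearGroup.det_coe _
  have h1 : (1:ℝ) ≤ (Nat.factorial d) * b ^ d := by
    have := abs_det_le ((A⁻¹ : SLd d) : Matrix (Fin d) (Fin d) ℝ) b hb0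
      (fun i j => entry_le_mOpNorm _ i j)
    rw [hdet] at this
    simpa using this
  have hfac1 : (1:ℝ) ≤ (Nat.factorial d) := by
    exact_mod_cast Nat.one_le_iff_ne_zero.mpr (Nat.factorial_ne_zero d)
  have key : a ^ d ≤ ((Nat.factorial d) * κ) ^ d := by
    calc a ^ d = a ^ d * 1 := by ring
      _ ≤ a ^ d * ((Nat.factorial d) * b ^ d) :=
          mul_le_mul_of_nonneg_left h1 (pow_nonneg ha0 d)
      _ = (Nat.factorial d) * (a * b) ^ d := by rw [mul_pow]; ring
      _ ≤ (Nat.factorial d) * κ ^ d := by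
          refine mul_le_mul_of_nonneg_left ?_ (by positivity)
          exact pow_le_pow_left₀ (mul_nonneg ha0 hb0) h d
      _ ≤ (Nat.factorial d) ^ d * κ ^ d := by
          refine mul_le_mul_of_nonneg_right ?_ (by positivity)
          exact le_self_pow₀ hfac1 hd.ne'
      _ = ((Nat.factorial d) * κ) ^ d := (mul_pow _ _ _).symm
  exact (pow_le_pow_iff_left₀ ha0 (by positivity) hd.ne').mp key

/-- Forward direction: a κ-conformal branch yields a bounded invariant set. -/
lemma forward_dir {d : ℕ} (𝒟 : Set (SLd d)) (κ : ℝ) (hκ : 1 ≤ κ)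
    (h : ∃ D : ℕ → SLd d, (∀ i, 1 ≤ i → D i ∈ 𝒟) ∧
      ∀ n, 1 ≤ n → SLConformal κ (branchProd D n)) :
    ∃ 𝒰 : Set (SLd d), 𝒰.Nonempty ∧
      (∃ H : ℝ, ∀ A ∈ 𝒰, mOpNorm (A : Matrix (Fin d) (Fin d) ℝ) ≤ H) ∧
      𝒰 ⊆ ⋃ D ∈ 𝒟, (fun X : SLd d => D⁻¹ * X) '' 𝒰 := by
  obtain ⟨D, hD, hconf⟩ := h
  refine ⟨Set.range (branchProd D), ⟨_, ⟨0, rfl⟩⟩,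
    ⟨max 1 ((Nat.factorial d) * κ), ?_⟩, ?_⟩
  · rintro A ⟨n, rfl⟩
    cases n with
    | zero =>
        refine le_trans ?_ (le_max_left _ _)
        show mOpNorm ((branchProd D 0 : SLd d) : Matrix (Fin d) (Fin d) ℝ) ≤ 1
        rw [show branchProd D 0 = (1 : SLd d) from rfl, Matrix.SpecialLinearGroup.coe_one]
        exact mOpNorm_one_le
    | succ n =>
        refine le_trans ?_ (le_max_right _ _)
        exact mOpNorm_le_of_conformal _ κ hκ (hconf (n+1) (by omega))
  · rintro A ⟨n, rfl⟩
    refine Set.mem_iUnion.mpr ⟨D (n+1), Set.mem_iUnion.mpr ⟨hD (n+1) (by omega),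
      ⟨branchProd D (n+1), ⟨n+1, rfl⟩, ?_⟩⟩⟩
    show (D (n+1))⁻¹ * branchProd D (n+1) = branchProd D n
    rw [show branchProd D (n+1) = D (n+1) * branchProd D n from rfl]
    group

end Aux

/-- Quasi-conformality criterion, group case: For any `𝒟 ⊆ SL(d,ℝ)`,
there exists `κ > 1` such that the semigroup generated by `𝒟` has a `κ`-conformal
infinite branch if and only if there is a (nonempty) bounded `𝒰 ⊆ SL(d,ℝ)` with
`𝒰 ⊆ 𝒟⁻¹𝒰`. -/
theorem stmt11 (d : ℕ) (𝒟 : Set (SLd d)) :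
    ∃ κ : ℝ, 1 < κ ∧
      ((∃ D : ℕ → SLd d, (∀ i, 1 ≤ i → D i ∈ 𝒟) ∧
          ∀ n, 1 ≤ n → SLConformal κ (branchProd D n)) ↔
        ∃ 𝒰 : Set (SLd d), 𝒰.Nonempty ∧
          (∃ H : ℝ, ∀ A ∈ 𝒰, mOpNorm (A : Matrix (Fin d) (Fin d) ℝ) ≤ H) ∧
          𝒰 ⊆ ⋃ D ∈ 𝒟, (fun X : SLd d => D⁻¹ * X) '' 𝒰) := by
  by_cases hP : ∃ 𝒰 : Set (SLd d), 𝒰.Nonempty ∧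
      (∃ H : ℝ, ∀ A ∈ 𝒰, mOpNorm (A : Matrix (Fin d) (Fin d) ℝ) ≤ H) ∧
      𝒰 ⊆ ⋃ D ∈ 𝒟, (fun X : SLd d => D⁻¹ * X) '' 𝒰
  · obtain ⟨𝒰, ⟨U₀, hU₀⟩, ⟨H, hH⟩, hsub⟩ := hP
    set C : ℝ := max H 1 with hCdef
    have hC1 : (1:ℝ) ≤ C := le_max_right _ _
    have hC0 : (0:ℝ) ≤ C := zero_le_one.trans hC1
    have hbound : ∀ A ∈ 𝒰, mOpNorm (A : Matrix (Fin d) (Fin d) ℝ) ≤ C :=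
      fun A hA => (hH A hA).trans (le_max_left _ _)
    set c : ℝ := (d:ℝ)^2 * (Nat.factorial d) * C ^ d with hcdef
    have hc0 : (0:ℝ) ≤ c := by positivity
    have hinvb : ∀ A ∈ 𝒰, mOpNorm (((A:SLd d)⁻¹ : SLd d) : Matrix (Fin d) (Fin d) ℝ) ≤ c :=
      fun A hA => inv_mOpNorm_le A C hC1 (hbound A hA)
    set κ : ℝ := 2 + (C * c)^2 with hκdef
    have hκ1 : 1 < κ := by nlinarith [sq_nonneg (C * c)]
    refine ⟨κ, hκ1, ?_, ?_⟩
    · intro _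
      exact ⟨𝒰, ⟨U₀, hU₀⟩, ⟨H, hH⟩, hsub⟩
    · intro _
      -- construct the branch by recursion
      have key2 : ∀ x : {x // x ∈ 𝒰}, ∃ (Dx : SLd d) (y : {x // x ∈ 𝒰}),
          Dx ∈ 𝒟 ∧ Dx⁻¹ * (y : SLd d) = (x : SLd d) := by
        rintro ⟨x, hx⟩
        have := hsub hx
        simp only [Set.mem_iUnion, Set.mem_image] at this
        obtain ⟨Dx, hDx, y, hy, hxy⟩ := this
        exact ⟨Dx, ⟨y, hy⟩, hDx, hxy⟩
      choose gD gY hgD hgEq using key2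
      set U : ℕ → {x // x ∈ 𝒰} := fun n => Nat.rec ⟨U₀, hU₀⟩ (fun _ u => gY u) n with hU
      have hUsucc : ∀ n, U (n+1) = gY (U n) := fun n => rfl
      set D' : ℕ → SLd d := fun n => gD (U (n-1)) with hD'
      have hDmem : ∀ i, 1 ≤ i → D' i ∈ 𝒟 := fun i _ => hgD _
      have hbp : ∀ n, ((U n : SLd d)) = branchProd D' n * U₀ := by
        intro n
        induction n with
        | zero =>
            show (U₀ : SLd d) = branchProd D' 0 * U₀
            rw [show branchProd D' 0 = (1 : SLd d) from rfl, one_mul]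
        | succ n ih =>
            have h1 : (gD (U n))⁻¹ * (gY (U n) : SLd d) = (U n : SLd d) := hgEq (U n)
            have h2 : (gY (U n) : SLd d) = gD (U n) * (U n : SLd d) := by
              rw [← h1]; group
            rw [hUsucc, h2, ih]
            have : D' (n+1) = gD (U n) := by simp [hD']
            rw [show branchProd D' (n+1) = D' (n+1) * branchProd D' n from rfl, this, mul_assoc]
      refine ⟨D', hDmem, ?_⟩
      intro n _
      have hbn : branchProd D' n = (U n : SLd d) * U₀⁻¹ := by
        rw [hbp n]; group
      have hinv : (branchProd D' n)⁻¹ = U₀ * ((U n : SLd d))⁻¹ := by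
        rw [hbn]; group
      unfold SLConformal
      rw [hinv, hbn, Matrix.SpecialLinearGroup.coe_mul, Matrix.SpecialLinearGroup.coe_mul]
      have f1 : mOpNorm (((U n : SLd d)) : Matrix (Fin d) (Fin d) ℝ) ≤ C :=
        hbound _ (U n).2
      have f2 : mOpNorm ((U₀⁻¹ : SLd d) : Matrix (Fin d) (Fin d) ℝ) ≤ c := hinvb U₀ hU₀
      have f3 : mOpNorm ((U₀ : SLd d) : Matrix (Fin d) (Fin d) ℝ) ≤ C := hbound _ hU₀
      have f4 : mOpNorm ((((U n : SLd d))⁻¹ : SLd d) : Matrix (Fin d) (Fin d) ℝ) ≤ c :=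
        hinvb _ (U n).2
      have g1 : mOpNorm (((U n : SLd d) : Matrix (Fin d) (Fin d) ℝ) *
          ((U₀⁻¹ : SLd d) : Matrix (Fin d) (Fin d) ℝ)) ≤ C * c :=
        (mOpNorm_mul_le _ _).trans
          (mul_le_mul f1 f2 (mOpNorm_nonneg _) hC0)
      have g2 : mOpNorm (((U₀ : SLd d) : Matrix (Fin d) (Fin d) ℝ) *
          ((((U n : SLd d))⁻¹ : SLd d) : Matrix (Fin d) (Fin d) ℝ)) ≤ C * c :=
        (mOpNorm_mul_le _ _).trans
          (mul_le_mul f3 f4 (mOpNorm_nonneg _) hC0)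
      calc mOpNorm _ * mOpNorm _ ≤ (C * c) * (C * c) :=
            mul_le_mul g1 g2 (mOpNorm_nonneg _) (by positivity)
        _ ≤ κ := by rw [hκdef]; nlinarith [sq_nonneg (C*c)]
  · refine ⟨2, one_lt_two, ?_, ?_⟩
    · intro hL
      exact absurd (forward_dir 𝒟 2 one_le_two hL) hP
    · intro hR
      exact absurd hR hP
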